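/- arXiv:1606.07635 — 2 statements merged into one kernel-verified Lean document; each statement's English description precedes it below -/
import Mathlib

section
/- A density matrix ρ on (ℂ²)^{⊗N}, equal to its projection onto the symmetric subspace, is fully separable if and only if there exist finitely many weights w_i ≥ 0 and unit vectors |α_i⟩ ∈ ℂ² such that ρ = Σ_i w_i (|α_i⟩⟨α_i|)^{⊗N}. -/
open Matrix ComplexOrder

/-- Tensor product of `N` one-qubit operators, as a matrix on `(ℂ²)^{⊗N}`. -/
def tensorProd {N : ℕ} (M : Fin N → Matrix (Fin 2) (Fin 2) ℂ) :
    Matrix (Fin N → Fin 2) (Fin N → Fin 2) ℂ :=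
  Matrix.of fun x y => ∏ k, M k (x k) (y k)

/-- The permutation operator on `(ℂ²)^{⊗N}` sending `ψ` to `x ↦ ψ (x ∘ σ)`. -/
def permOp (N : ℕ) (σ : Equiv.Perm (Fin N)) :
    Matrix (Fin N → Fin 2) (Fin N → Fin 2) ℂ :=
  Matrix.of fun x y => if y = x ∘ σ then 1 else 0

/-- The orthogonal projector onto the symmetric subspace of `(ℂ²)^{⊗N}`. -/
noncomputable def symProj (N : ℕ) : Matrix (Fin N → Fin 2) (Fin N → Fin 2) ℂ :=
  ((N.factorial : ℂ))⁻¹ • ∑ σ : Equiv.Perm (Fin N), permOp N σ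

/-!
Expanding every one-qubit state of a separable decomposition in its eigenbasis writes `ρ` as a
nonnegative combination of pure product states `|b₁ ⊗ ⋯ ⊗ b_N⟩⟨b₁ ⊗ ⋯ ⊗ b_N|`. Since
`(1 - P) ρ (1 - P) = 0` for the symmetrizer `P`, every product vector of positive weight is
symmetric. Invariance under the transposition of two sites `z, k` forces
`b_z(s) b_k(t) = b_z(t) b_k(s)`, so the unit factors agree up to phases and the pure state is
`(|b⟩⟨b|)^{⊗N}`. The converse direction is immediate.
-/

section RankOne

variable {𝕜 n ι : Type*} [RCLike 𝕜] [Fintype n] [Fintype ι]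

theorem Matrix.PosSemidef.exists_eq_sum_smul_vecMulVec [DecidableEq n] {A : Matrix n n 𝕜}
    (hA : A.PosSemidef) :
    ∃ (e : n → ℝ) (u : n → n → 𝕜), (∀ j, 0 ≤ e j) ∧ (∀ j, star (u j) ⬝ᵥ u j = 1) ∧
      A = ∑ j, (e j : 𝕜) • vecMulVec (u j) (star (u j)) := by
  refine ⟨hA.1.eigenvalues, fun j => hA.1.eigenvectorBasis j, hA.eigenvalues_nonneg,
    fun j => ?_, ?_⟩
  · rw [dotProduct_comm, ← EuclideanSpace.inner_eq_star_dotProduct,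
      inner_self_eq_one_of_norm_eq_one (hA.1.eigenvectorBasis.orthonormal.1 j)]
  · conv_lhs => rw [hA.1.spectral_theorem]
    ext x y
    simp [mul_apply, IsHermitian.eigenvectorUnitary_apply, Matrix.sum_apply, diagonal_apply,
      vecMulVec_apply, RCLike.real_smul_eq_coe_mul, mul_comm, mul_left_comm, mul_assoc]

theorem Matrix.mul_vecMulVec_star_mul_conjTranspose {m : Type*} (Q : Matrix m n 𝕜)
    (v : n → 𝕜) : Q * vecMulVec v (star v) * Qᴴ = vecMulVec (Q *ᵥ v) (star (Q *ᵥ v)) := by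
  rw [mul_vecMulVec, vecMulVec_mul, star_mulVec]

open scoped MatrixOrder in
theorem eq_zero_of_sum_smul_vecMulVec_eq_zero {W : ι → ℝ} (hW : ∀ p, 0 ≤ W p)
    {v : ι → n → 𝕜} (h : ∑ p, (W p : 𝕜) • vecMulVec (v p) (star (v p)) = 0)
    {p : ι} (hp : W p ≠ 0) : v p = 0 := by
  have hterm := (Finset.sum_eq_zero_iff_of_nonneg fun q _ =>
    ((posSemidef_vecMulVec_self_star (v q)).smul (RCLike.ofReal_nonneg.mpr (hW q))).nonneg).mp
      h p (Finset.mem_univ p)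
  simpa [hp] using hterm

theorem mulVec_eq_zero_of_mul_sum_mul_conjTranspose_eq_zero {m : Type*} [Fintype m]
    (Q : Matrix m n 𝕜) {W : ι → ℝ} (hW : ∀ p, 0 ≤ W p) {v : ι → n → 𝕜}
    (h : Q * (∑ p, (W p : 𝕜) • vecMulVec (v p) (star (v p))) * Qᴴ = 0)
    {p : ι} (hp : W p ≠ 0) : Q *ᵥ v p = 0 := by
  refine eq_zero_of_sum_smul_vecMulVec_eq_zero (v := fun p => Q *ᵥ v p) hW ?_ hp
  simpa [Matrix.mul_sum, Matrix.sum_mul, mul_vecMulVec_star_mul_conjTranspose] using h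

theorem mulVec_eq_self_of_mul_sum_mul_eq [DecidableEq n] {P : Matrix n n 𝕜}
    (hP : P.IsHermitian) (hPP : IsIdempotentElem P) {W : ι → ℝ} (hW : ∀ p, 0 ≤ W p)
    {v : ι → n → 𝕜}
    (h : P * (∑ p, (W p : 𝕜) • vecMulVec (v p) (star (v p))) * P =
      ∑ p, (W p : 𝕜) • vecMulVec (v p) (star (v p)))
    {p : ι} (hp : W p ≠ 0) : P *ᵥ v p = v p := by
  have hQP : (1 - P) * P = 0 := by rw [Matrix.sub_mul, Matrix.one_mul, hPP.eq, sub_self]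
  have hQ := mulVec_eq_zero_of_mul_sum_mul_conjTranspose_eq_zero (1 - P) hW (p := p) (by
    rw [conjTranspose_sub, conjTranspose_one, hP.eq, ← h]
    simp only [← Matrix.mul_assoc, hQP, Matrix.zero_mul]) hp
  rwa [sub_mulVec, one_mulVec, sub_eq_zero, eq_comm] at hQ

theorem vecMulVec_star_eq_of_mul_eq_mul {u v : n → 𝕜} (hu : star u ⬝ᵥ u = 1)
    (hv : star v ⬝ᵥ v = 1) (h : ∀ s t, u s * v t = u t * v s) :
    vecMulVec v (star v) = vecMulVec u (star u) := by
  obtain ⟨j, hj⟩ : ∃ j, u j ≠ 0 := Function.ne_iff.mp fun h0 => by simp [h0] at hu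
  set μ := v j / u j
  have hvu : v = μ • u := funext fun t => by
    rw [Pi.smul_apply, smul_eq_mul, div_mul_eq_mul_div, eq_div_iff hj]
    linear_combination h j t
  have hμ : μ * star μ = 1 := by
    rw [hvu, star_smul, smul_dotProduct, dotProduct_smul, hu] at hv
    simpa [mul_comm] using hv
  rw [hvu, star_smul, smul_vecMulVec, vecMulVec_smul, smul_smul, hμ, one_smul]

end RankOne

/-- The product vector `b 0 ⊗ ⋯ ⊗ b (N - 1)` when `ι = Fin N`. -/
def prodVec {ι α R : Type*} [Fintype ι] [CommMonoid R] (b : ι → α → R) (x : ι → α) : R :=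
  ∏ k, b k (x k)

theorem mul_eq_mul_of_prodVec_comp_swap {ι α K : Type*} [Fintype ι] [DecidableEq ι]
    [CommRing K] [IsDomain K] {b : ι → α → K} (hb : ∀ k, b k ≠ 0) (z k : ι)
    (hswap : ∀ x, prodVec b (x ∘ Equiv.swap z k) = prodVec b x) (s t : α) :
    b z s * b k t = b z t * b k s := by
  rcases eq_or_ne z k with rfl | hzk
  · exact mul_comm _ _
  -- evaluate at points that agree off `{z, k}` with a point where no factor vanishes
  choose y hy using fun j => Function.ne_iff.mp (hb j)
  let x : α → α → ι → α := fun s t => Function.update (Function.update y z s) k t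
  have hx : ∀ s t, x s t ∘ Equiv.swap z k = x t s := by
    intro s t; funext j
    simp only [x, Function.comp_apply, Function.update_apply, Equiv.swap_apply_def]
    split_ifs <;> simp_all
  have hsplit : ∀ s t, prodVec b (x s t) = b z s * b k t * ∏ j ∈ {z, k}ᶜ, b j (y j) := by
    intro s t
    rw [prodVec, ← Finset.prod_mul_prod_compl {z, k}, Finset.prod_pair hzk]
    congr 1
    · simp [x, hzk]
    · refine Finset.prod_congr rfl fun j hj => ?_
      simp only [Finset.mem_compl, Finset.mem_insert, Finset.mem_singleton, not_or] at hj
      simp [x, hj.1, hj.2]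
  have hC : ∏ j ∈ {z, k}ᶜ, b j (y j) ≠ 0 := Finset.prod_ne_zero_iff.mpr fun j _ => hy j
  have := hswap (x s t)
  rw [hx, hsplit, hsplit] at this
  exact (mul_right_cancel₀ hC this).symm

section TensorProd

variable {N : ℕ}

theorem tensorProd_sum {ι : Type*} [Fintype ι] (A : Fin N → ι → Matrix (Fin 2) (Fin 2) ℂ) :
    tensorProd (fun k => ∑ j, A k j) = ∑ f : Fin N → ι, tensorProd (fun k => A k (f k)) := by
  ext x y
  simp only [tensorProd, of_apply, Matrix.sum_apply]
  rw [Finset.prod_univ_sum, Fintype.piFinset_univ]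

theorem tensorProd_smul (c : Fin N → ℂ) (M : Fin N → Matrix (Fin 2) (Fin 2) ℂ) :
    tensorProd (fun k => c k • M k) = (∏ k, c k) • tensorProd M := by
  ext x y
  simp [tensorProd, Finset.prod_mul_distrib]

theorem tensorProd_vecMulVec (b : Fin N → Fin 2 → ℂ) :
    tensorProd (fun k => vecMulVec (b k) (star (b k))) =
      vecMulVec (prodVec b) (star (prodVec b)) := by
  ext x y
  simp [tensorProd, prodVec, vecMulVec_apply, Finset.prod_mul_distrib]

theorem exists_sum_smul_vecMulVec_prodVec {m : ℕ} {lam : Fin m → ℝ} (hlam : ∀ i, 0 ≤ lam i)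
    {τ : Fin m → Fin N → Matrix (Fin 2) (Fin 2) ℂ} (hτ : ∀ i k, (τ i k).PosSemidef) :
    ∃ (W : Fin m × (Fin N → Fin 2) → ℝ) (b : Fin m × (Fin N → Fin 2) → Fin N → Fin 2 → ℂ),
      (∀ p, 0 ≤ W p) ∧ (∀ p k, star (b p k) ⬝ᵥ b p k = 1) ∧
      ∑ i, (lam i : ℂ) • tensorProd (τ i) =
        ∑ p, (W p : ℂ) • vecMulVec (prodVec (b p)) (star (prodVec (b p))) := by
  choose e u he hu hτeq using fun i k => (hτ i k).exists_eq_sum_smul_vecMulVec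
  refine ⟨fun p => lam p.1 * ∏ k, e p.1 k (p.2 k), fun p k => u p.1 k (p.2 k),
    fun p => mul_nonneg (hlam _) (Finset.prod_nonneg fun k _ => he _ _ _),
    fun p k => hu _ _ _, ?_⟩
  rw [Fintype.sum_prod_type]
  refine Finset.sum_congr rfl fun i _ => ?_
  rw [show τ i = _ from funext (hτeq i), tensorProd_sum, Finset.smul_sum]
  refine Finset.sum_congr rfl fun f _ => ?_
  rw [tensorProd_smul, tensorProd_vecMulVec, smul_smul]
  push_cast
  rfl

end TensorProd

section Symmetrization

variable (N : ℕ)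

theorem permOp_mul (σ τ : Equiv.Perm (Fin N)) :
    permOp N σ * permOp N τ = permOp N (σ * τ) := by
  ext x y
  simp only [permOp, mul_apply, of_apply, ite_mul, one_mul, zero_mul,
    Finset.sum_ite_eq', Finset.mem_univ, if_true]
  rfl

theorem permOp_conjTranspose (σ : Equiv.Perm (Fin N)) : (permOp N σ)ᴴ = permOp N σ⁻¹ := by
  ext x y
  simp only [permOp, conjTranspose_apply, of_apply, apply_ite star, star_one, star_zero,
    Equiv.Perm.inv_def, Equiv.eq_comp_symm, eq_comm]

theorem permOp_mulVec (σ : Equiv.Perm (Fin N)) (v : (Fin N → Fin 2) → ℂ) :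
    permOp N σ *ᵥ v = fun x => v (x ∘ σ) := by
  funext x
  simp [permOp, mulVec, dotProduct]

theorem permOp_mul_symProj (σ : Equiv.Perm (Fin N)) : permOp N σ * symProj N = symProj N := by
  rw [symProj, mul_smul_comm, Finset.mul_sum]
  congr 1
  simp_rw [permOp_mul]
  exact Fintype.sum_equiv (Equiv.mulLeft σ) _ _ fun _ => rfl

theorem isIdempotentElem_symProj : IsIdempotentElem (symProj N) := by
  rw [IsIdempotentElem]
  nth_rewrite 1 [symProj]
  rw [smul_mul_assoc, Finset.sum_mul]
  simp_rw [permOp_mul_symProj]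
  rw [Finset.sum_const, Finset.card_univ, Fintype.card_perm, Fintype.card_fin,
    ← Nat.cast_smul_eq_nsmul ℂ, smul_smul,
    inv_mul_cancel₀ (by exact_mod_cast N.factorial_ne_zero), one_smul]

theorem symProj_isHermitian : (symProj N).IsHermitian := by
  rw [IsHermitian, symProj, conjTranspose_smul, conjTranspose_sum]
  simp_rw [permOp_conjTranspose]
  congr 1
  · rw [star_inv₀, star_natCast]
  · exact Fintype.sum_equiv (Equiv.inv _) _ _ fun _ => rfl

variable {N}

theorem apply_comp_perm_of_symProj_mulVec_eq {v : (Fin N → Fin 2) → ℂ}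
    (hv : symProj N *ᵥ v = v) (σ : Equiv.Perm (Fin N)) (x : Fin N → Fin 2) : v (x ∘ σ) = v x := by
  rw [← congrFun (permOp_mulVec N σ v) x, ← hv, mulVec_mulVec, permOp_mul_symProj]

end Symmetrization

theorem exists_unit_smul_vecMulVec_prodVec_eq {N : ℕ} {W : ℝ} {b : Fin N → Fin 2 → ℂ}
    (hb : ∀ k, star (b k) ⬝ᵥ b k = 1)
    (hsymm : W ≠ 0 → ∀ (σ : Equiv.Perm (Fin N)) x, prodVec b (x ∘ σ) = prodVec b x) :
    ∃ a : Fin 2 → ℂ, star a ⬝ᵥ a = 1 ∧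
      (W : ℂ) • vecMulVec (prodVec b) (star (prodVec b)) =
        (W : ℂ) • tensorProd (fun _ => vecMulVec a (star a)) := by
  rcases eq_or_ne W 0 with rfl | hW
  · exact ⟨Pi.single 0 1, by simp, by simp⟩
  rw [← tensorProd_vecMulVec]
  cases N with
  | zero => exact ⟨Pi.single 0 1, by simp, by congr 2; exact Subsingleton.elim _ _⟩
  | succ n =>
    have hb0 : ∀ k, b k ≠ 0 := fun k h0 => by simpa [h0] using hb k
    refine ⟨b 0, hb 0, ?_⟩
    congr 2
    funext k
    exact vecMulVec_star_eq_of_mul_eq_mul (hb 0) (hb k)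
      (mul_eq_mul_of_prodVec_comp_swap hb0 0 k (hsymm hW _))

theorem stmt10_general
    (N : ℕ)
    (ρ : Matrix (Fin N → Fin 2) (Fin N → Fin 2) ℂ)
    (hsym : symProj N * ρ * symProj N = ρ) :
    (∃ (m : ℕ) (lam : Fin m → ℝ)
        (τ : Fin m → Fin N → Matrix (Fin 2) (Fin 2) ℂ),
        (∀ i, 0 ≤ lam i) ∧
        (∀ i k, (τ i k).PosSemidef ∧ (τ i k).trace = 1) ∧
        ρ = ∑ i, (lam i : ℂ) • tensorProd (τ i)) ↔
    (∃ (m : ℕ) (w : Fin m → ℝ) (α : Fin m → Fin 2 → ℂ),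
        (∀ i, 0 ≤ w i) ∧ (∀ i, star (α i) ⬝ᵥ α i = 1) ∧
        ρ = ∑ i, (w i : ℂ) •
          tensorProd (fun _ => vecMulVec (α i) (star (α i)))) := by
  constructor
  · rintro ⟨m, lam, τ, hlam, hτ, rfl⟩
    obtain ⟨W, b, hW, hb, hρ⟩ := exists_sum_smul_vecMulVec_prodVec hlam fun i k => (hτ i k).1
    rw [hρ] at hsym ⊢
    have hsymm (p) (hp : W p ≠ 0) := apply_comp_perm_of_symProj_mulVec_eq
      (mulVec_eq_self_of_mul_sum_mul_eq (symProj_isHermitian N) (isIdempotentElem_symProj N)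
        hW hsym hp)
    choose a ha hterm using fun p => exists_unit_smul_vecMulVec_prodVec_eq (hb p) (hsymm p)
    let e := (Fintype.equivFin (Fin m × (Fin N → Fin 2))).symm
    refine ⟨_, W ∘ e, a ∘ e, fun _ => hW _, fun _ => ha _, ?_⟩
    rw [← e.sum_comp]
    exact Finset.sum_congr rfl fun i _ => hterm (e i)
  · rintro ⟨m, w, α, hw, hα, hρ⟩
    refine ⟨m, w, fun i _ => vecMulVec (α i) (star (α i)), hw, fun i _ => ⟨?_, ?_⟩, hρ⟩
    · exact posSemidef_vecMulVec_self_star _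
    · rw [trace_vecMulVec, dotProduct_comm, hα]

theorem stmt10
    (N : ℕ)
    (ρ : Matrix (Fin N → Fin 2) (Fin N → Fin 2) ℂ)
    (hpsd : ρ.PosSemidef) (htr : ρ.trace = 1)
    (hsym : symProj N * ρ * symProj N = ρ) :
    (∃ (m : ℕ) (lam : Fin m → ℝ)
        (τ : Fin m → Fin N → Matrix (Fin 2) (Fin 2) ℂ),
        (∀ i, 0 ≤ lam i) ∧
        (∀ i k, (τ i k).PosSemidef ∧ (τ i k).trace = 1) ∧
        ρ = ∑ i, (lam i : ℂ) • tensorProd (τ i)) ↔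
    (∃ (m : ℕ) (w : Fin m → ℝ) (α : Fin m → Fin 2 → ℂ),
        (∀ i, 0 ≤ w i) ∧ (∀ i, star (α i) ⬝ᵥ α i = 1) ∧
        ρ = ∑ i, (w i : ℂ) •
          tensorProd (fun _ => vecMulVec (α i) (star (α i)))) :=
  stmt10_general N ρ hsym
end

section
/- If ρ on (ℂ²)^{⊗2j} is a convex combination ρ = Σ_i w_i (|α_i⟩⟨α_i|)^{⊗2j} with w_i ≥ 0, then the matrix T_{μ,ν} = X_{μ_1…μ_j ν_1…ν_j} (with X the Pauli expansion coefficients of ρ) is positive semidefinite. -/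
open Matrix

noncomputable def pauli : Fin 4 → Matrix (Fin 2) (Fin 2) ℂ :=
  ![(1 : Matrix (Fin 2) (Fin 2) ℂ),
    !![0, 1; 1, 0],
    !![0, -Complex.I; Complex.I, 0],
    !![1, 0; 0, -1]]

noncomputable def pauliTensor {j : ℕ} (μ ν : Fin j → Fin 4) :
    Matrix ((Fin j → Fin 2) × (Fin j → Fin 2)) ((Fin j → Fin 2) × (Fin j → Fin 2)) ℂ :=
  Matrix.of fun a c =>
    (∏ k, pauli (μ k) (a.1 k) (c.1 k)) * ∏ k, pauli (ν k) (a.2 k) (c.2 k)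

/-- `(|α⟩⟨α|)^{⊗2j}` as a matrix on `(ℂ²)^{⊗2j}`. -/
noncomputable def cohProj {j : ℕ} (α : Fin 2 → ℂ) :
    Matrix ((Fin j → Fin 2) × (Fin j → Fin 2)) ((Fin j → Fin 2) × (Fin j → Fin 2)) ℂ :=
  Matrix.of fun a c =>
    (∏ k, α (a.1 k) * star (α (c.1 k))) * ∏ k, α (a.2 k) * star (α (c.2 k))

/-!
The trace of `(|α⟩⟨α|)^{⊗2j}` against a tensor product of Pauli matrices factorises into
the product of the single-qubit expectations `n_μ = ⟨α|σ^μ|α⟩`, which are real because the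
Pauli matrices are Hermitian. Hence `T = ∑ᵢ wᵢ vᵢ vᵢᵀ` with `vᵢ μ = ∏ₖ n⁽ⁱ⁾_{μₖ}`, a nonnegative
combination of rank-one positive semidefinite matrices.
-/

noncomputable def pauliExpectation (α : Fin 2 → ℂ) (p : Fin 4) : ℂ :=
  star α ⬝ᵥ pauli p *ᵥ α

lemma isHermitian_pauli (p : Fin 4) : (pauli p).IsHermitian := by
  ext x y
  fin_cases p <;> fin_cases x <;> fin_cases y <;> simp [pauli, one_apply]

lemma coe_re_pauliExpectation (α : Fin 2 → ℂ) (p : Fin 4) :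
    ((pauliExpectation α p).re : ℂ) = pauliExpectation α p :=
  Complex.ext rfl ((isHermitian_pauli p).im_star_dotProduct_mulVec_self α).symm

lemma Fintype.prod_sum_sum {ι κ R : Type*} [Fintype ι] [DecidableEq ι] [Fintype κ]
    [CommSemiring R] (f : ι → κ → κ → R) :
    ∏ k, ∑ x, ∑ y, f k x y = ∑ a : ι → κ, ∑ c : ι → κ, ∏ k, f k (a k) (c k) := by
  rw [Fintype.prod_sum]
  exact Finset.sum_congr rfl fun a _ => Fintype.prod_sum _

lemma prod_pauliExpectation {j : ℕ} (α : Fin 2 → ℂ) (μ : Fin j → Fin 4) :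
    ∏ k, pauliExpectation α (μ k)
      = ∑ a : Fin j → Fin 2, ∑ c : Fin j → Fin 2,
          ∏ k, α (a k) * star (α (c k)) * pauli (μ k) (c k) (a k) := by
  refine .trans ?_ (Fintype.prod_sum_sum fun k x y => α x * star (α y) * pauli (μ k) y x)
  refine Finset.prod_congr rfl fun k _ => ?_
  simp only [pauliExpectation, dotProduct, mulVec, Pi.star_apply, Finset.mul_sum]
  rw [Finset.sum_comm]
  exact Finset.sum_congr rfl fun x _ => Finset.sum_congr rfl fun y _ => by ring

lemma trace_cohProj_mul_pauliTensor {j : ℕ} (α : Fin 2 → ℂ) (μ ν : Fin j → Fin 4) :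
    (cohProj α * pauliTensor μ ν).trace
      = (∏ k, pauliExpectation α (μ k)) * ∏ k, pauliExpectation α (ν k) := by
  rw [prod_pauliExpectation, prod_pauliExpectation, trace]
  simp only [diag_apply, mul_apply, cohProj, pauliTensor, of_apply, Fintype.sum_prod_type,
    Finset.sum_mul_sum, ← Finset.prod_mul_distrib]
  refine Finset.sum_congr rfl fun a₁ _ => Finset.sum_congr rfl fun a₂ _ => ?_
  refine Finset.sum_congr rfl fun c₁ _ => Finset.sum_congr rfl fun c₂ _ => ?_
  exact Finset.prod_congr rfl fun k _ => by ring

theorem stmt16_general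
    (j m : ℕ)
    (w : Fin m → ℝ) (hw : ∀ i, 0 ≤ w i)
    (α : Fin m → Fin 2 → ℂ)
    (ρ : Matrix ((Fin j → Fin 2) × (Fin j → Fin 2)) ((Fin j → Fin 2) × (Fin j → Fin 2)) ℂ)
    (hρ : ρ = ∑ i, (w i : ℂ) • cohProj (α i))
    (T : Matrix (Fin j → Fin 4) (Fin j → Fin 4) ℝ)
    (hT : ∀ μ ν, (T μ ν : ℂ) = (ρ * pauliTensor μ ν).trace) :
    T.PosSemidef := by
  set v : Fin m → (Fin j → Fin 4) → ℝ := fun i μ => ∏ k, (pauliExpectation (α i) (μ k)).re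
  have hT_eq : T = ∑ i, w i • vecMulVec (v i) (star (v i)) := by
    ext μ ν
    apply Complex.ofReal_injective
    simp only [hT, hρ, Finset.sum_mul, trace_sum, smul_mul, trace_smul,
      trace_cohProj_mul_pauliTensor, Matrix.sum_apply, Matrix.smul_apply, vecMulVec_apply, star_trivial, v,
      smul_eq_mul, Complex.ofReal_sum, Complex.ofReal_mul, Complex.ofReal_prod,
      coe_re_pauliExpectation]
  rw [hT_eq]
  exact posSemidef_sum _ fun i _ => (posSemidef_vecMulVec_self_star (v i)).smul (hw i)

theorem stmt16
    (j m : ℕ)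
    (w : Fin m → ℝ) (hw : ∀ i, 0 ≤ w i)
    (α : Fin m → Fin 2 → ℂ) (hα : ∀ i, star (α i) ⬝ᵥ α i = 1)
    (ρ : Matrix ((Fin j → Fin 2) × (Fin j → Fin 2)) ((Fin j → Fin 2) × (Fin j → Fin 2)) ℂ)
    (hρ : ρ = ∑ i, (w i : ℂ) • cohProj (α i))
    (T : Matrix (Fin j → Fin 4) (Fin j → Fin 4) ℝ)
    (hT : ∀ μ ν, (T μ ν : ℂ) = (ρ * pauliTensor μ ν).trace) :
    T.PosSemidef :=
  stmt16_general j m w hw α ρ hρ T hT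
end
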